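/- Assume additionally that E i j holds for all distinct i, j ∈ {1,…,n}. For n < j ≤ d set S_j = s_j · s_1^{a_{j,1}} ⋯ s_n^{a_{j,n}} ∈ W(E), and for t ∈ (ZMod 2)^n set w_t = s_1^{t_1} ⋯ s_n^{t_n} (exponents in ZMod 2 interpreted as 0 or 1, so w_t = w_t^{−1}). Then ker φ is generated, as a subgroup of W(E), by the set { w_t · S_j · w_t : n+1 ≤ j ≤ d, t ∈ (ZMod 2)^n }. -/

import Mathlib

/-- Relators of the right-angled Coxeter group of the graph `E`:
`s j ^ 2` for every vertex `j`, and `(s i * s j) ^ 2` for every edge `{i, j}` of `E`. -/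
def racgRels {d : ℕ} (E : Fin d → Fin d → Prop) : Set (FreeGroup (Fin d)) :=
  {r | (∃ j : Fin d, r = FreeGroup.of j ^ 2) ∨
    ∃ i j : Fin d, E i j ∧ r = (FreeGroup.of i * FreeGroup.of j) ^ 2}

/-- The right-angled Coxeter group `W(E)` of the graph `E`. -/
abbrev RACG {d : ℕ} (E : Fin d → Fin d → Prop) : Type := PresentedGroup (racgRels E)

/-- The standard generator `s j` of the right-angled Coxeter group `W(E)`. -/
def racgGen {d : ℕ} (E : Fin d → Fin d → Prop) (j : Fin d) : RACG E :=
  PresentedGroup.of j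

/-!
Write `w_t = s_1^{t_1} ⋯ s_n^{t_n}` and let `N` be the subgroup generated by the elements
`w_t S_j w_t`. Since `s_1, …, s_n` are pairwise commuting involutions, `t ↦ w_t` is a
homomorphism from `(ℤ/2)^n` with `φ (w_t) = t`, and `S_j = s_j w_{a_j}` lies in `ker φ`;
hence `N ≤ ker φ`. Conversely the set `N · {w_t}` contains `1` and is stable under right
multiplication by every generator: `w_t s_k = w_{t + e_k}` for `k ≤ n`, and
`w_t s_k = (w_t S_k w_t) w_{t + a_k}` for `k > n`. So every `g` is `x w_t` with `x ∈ N`,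
and `φ g = 1` forces `t = 0`.
-/

open Finset

section CommutingInvolutions

variable {G : Type*} [Group G] {n : ℕ}

def involProd (s : Fin n → G) (t : Fin n → ZMod 2) : G :=
  ((List.finRange n).map fun i => s i ^ (t i).val).prod

variable {s : Fin n → G}

lemma involProd_eq_noncommProd (hcomm : ∀ i j, Commute (s i) (s j))
    (t : Fin n → ZMod 2) :
    involProd s t = univ.noncommProd (fun i => s i ^ (t i).val)
      (fun i _ j _ _ => (hcomm i j).pow_pow _ _) :=
  (Multiset.noncommProd_coe _ _).symm

lemma involProd_zero : involProd s 0 = 1 :=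
  List.prod_eq_one (by simp)

lemma involProd_single (hcomm : ∀ i j, Commute (s i) (s j)) (k : Fin n) :
    involProd s (Pi.single k 1) = s k := by
  rw [involProd_eq_noncommProd hcomm]
  refine (mul_noncommProd_erase univ (mem_univ k) _ _).symm.trans ?_
  rw [Pi.single_eq_same, ZMod.val_one, pow_one, mul_eq_left]
  exact (noncommProd_eq_pow_card _ _ _ 1 fun i hi => by simp [ne_of_mem_erase hi]).trans
    (one_pow _)

lemma involProd_add (hs : ∀ i, s i ^ 2 = 1) (hcomm : ∀ i j, Commute (s i) (s j))
    (t u : Fin n → ZMod 2) : involProd s (t + u) = involProd s t * involProd s u := by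
  have hpow : ∀ i, s i ^ (t i + u i).val = s i ^ (t i).val * s i ^ (u i).val := fun i => by
    rw [ZMod.val_add, ← pow_eq_pow_mod _ (hs i), pow_add]
  simp only [involProd_eq_noncommProd hcomm, Pi.add_apply, hpow]
  exact noncommProd_mul_distrib (fun i => s i ^ (t i).val) (fun i => s i ^ (u i).val) _ _
    fun i _ j _ _ => (hcomm i j).pow_pow _ _

lemma involProd_mul_self (hs : ∀ i, s i ^ 2 = 1) (hcomm : ∀ i j, Commute (s i) (s j))
    (t : Fin n → ZMod 2) : involProd s t * involProd s t = 1 := by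
  rw [← involProd_add hs hcomm, ZModModule.add_self, involProd_zero]

lemma map_involProd {H : Type*} [Group H] (φ : G →* H) (t : Fin n → ZMod 2) :
    φ (involProd s t) = involProd (φ ∘ s) t := by
  simp [involProd, map_list_prod, Function.comp_def]

lemma involProd_ofAdd_single (t : Fin n → ZMod 2) :
    involProd (fun i => Multiplicative.ofAdd (Pi.single i (1 : ZMod 2))) t =
      Multiplicative.ofAdd t := by
  rw [involProd, ← Fin.prod_univ_def]
  simp only [← ofAdd_nsmul, ← ofAdd_sum, ← Pi.single_smul, nsmul_one, ZMod.natCast_val,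
    ZMod.cast_id', id, univ_sum_single]

end CommutingInvolutions

section RightAngledCoxeter

variable {d : ℕ} {E : Fin d → Fin d → Prop}

lemma racgGen_sq (j : Fin d) : racgGen E j ^ 2 = 1 := by
  simpa [racgGen, PresentedGroup.of] using
    PresentedGroup.one_of_mem (rels := racgRels E) (Or.inl ⟨j, rfl⟩)

lemma racgGen_inv (j : Fin d) : (racgGen E j)⁻¹ = racgGen E j :=
  inv_eq_of_mul_eq_one_right (by rw [← sq, racgGen_sq])

lemma commute_racgGen {i j : Fin d} (h : E i j) : Commute (racgGen E i) (racgGen E j) := by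
  have hsq : (racgGen E i * racgGen E j) ^ 2 = 1 := by
    simpa [racgGen, PresentedGroup.of] using
      PresentedGroup.one_of_mem (rels := racgRels E) (Or.inr ⟨i, j, h, rfl⟩)
  calc racgGen E i * racgGen E j = (racgGen E i * racgGen E j)⁻¹ :=
        eq_inv_of_mul_eq_one_left (by rw [← sq, hsq])
    _ = racgGen E j * racgGen E i := by rw [mul_inv_rev, racgGen_inv, racgGen_inv]

end RightAngledCoxeter

section KernelGenerators

variable {d n : ℕ} (E : Fin d → Fin d → Prop) (hnd : n ≤ d) (a : Fin d → Fin n → ZMod 2)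

def kerGens : Set (RACG E) :=
  {x | ∃ j : Fin d, n ≤ j.val ∧ ∃ t : Fin n → ZMod 2,
    x = involProd (racgGen E ∘ Fin.castLE hnd) t *
      (racgGen E j * involProd (racgGen E ∘ Fin.castLE hnd) (a j)) *
        involProd (racgGen E ∘ Fin.castLE hnd) t}

variable {E a}

lemma map_involProd_castLE {φ : RACG E →* Multiplicative (Fin n → ZMod 2)}
    (ha : ∀ (i : Fin d) (h : i.val < n), a i = Pi.single (⟨i.val, h⟩ : Fin n) 1)
    (hφ : ∀ j : Fin d, φ (racgGen E j) = Multiplicative.ofAdd (a j)) (t : Fin n → ZMod 2) :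
    φ (involProd (racgGen E ∘ Fin.castLE hnd) t) = Multiplicative.ofAdd t := by
  rw [map_involProd, ← involProd_ofAdd_single t]
  congr 1
  funext i
  simp only [Function.comp_apply, hφ, ha (Fin.castLE hnd i) (by simp)]
  rfl

lemma closure_kerGens_le_ker {φ : RACG E →* Multiplicative (Fin n → ZMod 2)}
    (ha : ∀ (i : Fin d) (h : i.val < n), a i = Pi.single (⟨i.val, h⟩ : Fin n) 1)
    (hφ : ∀ j : Fin d, φ (racgGen E j) = Multiplicative.ofAdd (a j)) :
    Subgroup.closure (kerGens E hnd a) ≤ φ.ker := by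
  rw [Subgroup.closure_le]
  rintro x ⟨j, -, t, rfl⟩
  simp [map_involProd_castLE hnd ha hφ, hφ, ← ofAdd_add, ZModModule.add_self]

lemma commute_racgGen_castLE (hEn : ∀ i j : Fin d, i.val < n → j.val < n → i ≠ j → E i j)
    (i j : Fin n) :
    Commute ((racgGen E ∘ Fin.castLE hnd) i) ((racgGen E ∘ Fin.castLE hnd) j) := by
  rcases eq_or_ne i j with rfl | hij
  · exact Commute.refl _
  · exact commute_racgGen (hEn _ _ (by simp) (by simp) (by simpa [Fin.ext_iff] using hij))

lemma exists_mul_involProd_mul_racgGen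
    (hEn : ∀ i j : Fin d, i.val < n → j.val < n → i ≠ j → E i j)
    {x : RACG E} (hx : x ∈ Subgroup.closure (kerGens E hnd a)) (t : Fin n → ZMod 2)
    (k : Fin d) :
    ∃ x' ∈ Subgroup.closure (kerGens E hnd a), ∃ t' : Fin n → ZMod 2,
      x * involProd (racgGen E ∘ Fin.castLE hnd) t * racgGen E k =
        x' * involProd (racgGen E ∘ Fin.castLE hnd) t' := by
  have hs : ∀ i, (racgGen E ∘ Fin.castLE hnd) i ^ 2 = 1 := fun _ => racgGen_sq _
  have hcomm := commute_racgGen_castLE hnd hEn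
  by_cases hk : k.val < n
  · refine ⟨x, hx, t + Pi.single ⟨k, hk⟩ 1, ?_⟩
    rw [involProd_add hs hcomm, involProd_single hcomm, mul_assoc]
    rfl
  · refine ⟨x * (involProd _ t * (racgGen E k * involProd _ (a k)) * involProd _ t),
      mul_mem hx (Subgroup.subset_closure ⟨k, not_lt.mp hk, t, rfl⟩), t + a k, ?_⟩
    have hcancel : ∀ u y, involProd (racgGen E ∘ Fin.castLE hnd) u *
        (involProd (racgGen E ∘ Fin.castLE hnd) u * y) = y := fun u y => by
      rw [← mul_assoc, involProd_mul_self hs hcomm, one_mul]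
    rw [involProd_add hs hcomm]
    simp only [mul_assoc, hcancel, involProd_mul_self hs hcomm, mul_one]

lemma exists_mem_closure_kerGens_mul_involProd
    (hEn : ∀ i j : Fin d, i.val < n → j.val < n → i ≠ j → E i j) (g : RACG E) :
    ∃ x ∈ Subgroup.closure (kerGens E hnd a), ∃ t : Fin n → ZMod 2,
      g = x * involProd (racgGen E ∘ Fin.castLE hnd) t := by
  have hg : g ∈ Subgroup.closure (Set.range (racgGen E)) := by
    rw [show racgGen E = PresentedGroup.of from rfl, PresentedGroup.closure_range_of]
    exact Subgroup.mem_top g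
  induction hg using Subgroup.closure_induction_right with
  | one => exact ⟨1, one_mem _, 0, by rw [involProd_zero, mul_one]⟩
  | mul_right g _ _ hk ih =>
    obtain ⟨k, rfl⟩ := hk
    obtain ⟨x, hx, t, rfl⟩ := ih
    exact exists_mul_involProd_mul_racgGen hnd hEn hx t k
  | mul_inv_cancel g _ _ hk ih =>
    obtain ⟨k, rfl⟩ := hk
    obtain ⟨x, hx, t, rfl⟩ := ih
    rw [racgGen_inv]
    exact exists_mul_involProd_mul_racgGen hnd hEn hx t k

end KernelGenerators

theorem stmt_8_general {d : ℕ} (E : Fin d → Fin d → Prop)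
    (n : ℕ) (hnd : n ≤ d)
    (a : Fin d → Fin n → ZMod 2)
    (ha : ∀ (i : Fin d) (h : i.val < n), a i = Pi.single (⟨i.val, h⟩ : Fin n) 1)
    (φ : RACG E →* Multiplicative (Fin n → ZMod 2))
    (hφ : ∀ j : Fin d, φ (racgGen E j) = Multiplicative.ofAdd (a j))
    (hEn : ∀ i j : Fin d, i.val < n → j.val < n → i ≠ j → E i j) :
    φ.ker = Subgroup.closure
      {x : RACG E | ∃ j : Fin d, n ≤ j.val ∧ ∃ t : Fin n → ZMod 2,
        x = ((List.finRange n).map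
              (fun i => racgGen E (Fin.castLE hnd i) ^ ZMod.val (t i))).prod *
            (racgGen E j *
              ((List.finRange n).map
                (fun i => racgGen E (Fin.castLE hnd i) ^ ZMod.val (a j i))).prod) *
            ((List.finRange n).map
              (fun i => racgGen E (Fin.castLE hnd i) ^ ZMod.val (t i))).prod} := by
  change φ.ker = Subgroup.closure (kerGens E hnd a)
  have hle := closure_kerGens_le_ker hnd ha hφ
  refine le_antisymm (fun g hg => ?_) hle
  obtain ⟨x, hx, t, rfl⟩ := exists_mem_closure_kerGens_mul_involProd hnd hEn g
  have ht : Multiplicative.ofAdd t = 1 := by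
    rwa [MonoidHom.mem_ker, map_mul, hle hx, one_mul, map_involProd_castLE hnd ha hφ] at hg
  rwa [ofAdd_eq_one.mp ht, involProd_zero, mul_one]

/-- Assuming `E i j` for all distinct `i, j ∈ {1,…,n}`, the kernel of `φ` is generated,
as a subgroup of `W(E)`, by the elements `w_t * S_j * w_t` where, for `n < j ≤ d` and
`t ∈ (ℤ/2)^n`, `S_j = s_j * s_1^{a_{j,1}} ⋯ s_n^{a_{j,n}}` and
`w_t = s_1^{t_1} ⋯ s_n^{t_n}`. -/
theorem stmt_8 {d : ℕ} (hd : 1 ≤ d) (E : Fin d → Fin d → Prop)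
    (hsymm : ∀ i j, E i j → E j i) (hirr : ∀ i, ¬ E i i)
    (n : ℕ) (hn : 1 ≤ n) (hnd : n ≤ d)
    (a : Fin d → Fin n → ZMod 2)
    (ha : ∀ (i : Fin d) (h : i.val < n), a i = Pi.single (⟨i.val, h⟩ : Fin n) 1)
    (φ : RACG E →* Multiplicative (Fin n → ZMod 2))
    (hφ : ∀ j : Fin d, φ (racgGen E j) = Multiplicative.ofAdd (a j))
    (hEn : ∀ i j : Fin d, i.val < n → j.val < n → i ≠ j → E i j) :
    φ.ker = Subgroup.closure
      {x : RACG E | ∃ j : Fin d, n ≤ j.val ∧ ∃ t : Fin n → ZMod 2,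
        x = ((List.finRange n).map
              (fun i => racgGen E (Fin.castLE hnd i) ^ ZMod.val (t i))).prod *
            (racgGen E j *
              ((List.finRange n).map
                (fun i => racgGen E (Fin.castLE hnd i) ^ ZMod.val (a j i))).prod) *
            ((List.finRange n).map
              (fun i => racgGen E (Fin.castLE hnd i) ^ ZMod.val (t i))).prod} :=
  stmt_8_general E n hnd a ha φ hφ hEn
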